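/- For any graph G: G is ωψ-perfect if and only if G is (C₄, P₄, P₃∪K₂, 3K₂)-free. -/

import Mathlib

open SimpleGraph

/-- A coloring of the vertices with colors `0, ..., k-1` which uses all `k` colors and such
that every pair of distinct colors appears on the endpoints of some edge. -/
def IsCompleteColoring {V : Type*} (G : SimpleGraph V) (c : V → ℕ) (k : ℕ) : Prop :=
  (∀ v, c v < k) ∧ (∀ i, i < k → ∃ v, c v = i) ∧
    ∀ i j, i < k → j < k → i ≠ j → ∃ u w, G.Adj u w ∧ c u = i ∧ c w = j

/-- A proper coloring: adjacent vertices get distinct colors. -/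
def IsProperColoring {V : Type*} (G : SimpleGraph V) (c : V → ℕ) : Prop :=
  ∀ u w, G.Adj u w → c u ≠ c w

/-- A Grundy coloring with `k` colors: proper, uses all `k` colors, and every vertex of
color `j` has, for each `i < j`, a neighbor colored `i`. -/
def IsGrundyColoring {V : Type*} (G : SimpleGraph V) (c : V → ℕ) (k : ℕ) : Prop :=
  (∀ v, c v < k) ∧ (∀ i, i < k → ∃ v, c v = i) ∧ IsProperColoring G c ∧
    ∀ v i, i < c v → ∃ u, G.Adj u v ∧ c u = i

/-- The pseudoachromatic number `ψ`. -/
noncomputable def pseudoachromaticNumber {V : Type*} (G : SimpleGraph V) : ℕ :=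
  sSup {k | ∃ c, IsCompleteColoring G c k}

/-- The achromatic number `α`. -/
noncomputable def achromaticNumber {V : Type*} (G : SimpleGraph V) : ℕ :=
  sSup {k | ∃ c, IsCompleteColoring G c k ∧ IsProperColoring G c}

/-- The Grundy number `Γ`. -/
noncomputable def grundyNumber {V : Type*} (G : SimpleGraph V) : ℕ :=
  sSup {k | ∃ c, IsGrundyColoring G c k}

/-- The chromatic number `χ` (as a natural number). -/
noncomputable def chromNumber {V : Type*} (G : SimpleGraph V) : ℕ :=
  sInf {k | ∃ c : V → ℕ, (∀ v, c v < k) ∧ IsProperColoring G c}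

/-- The clique number `ω`. -/
noncomputable def cliqueNumber {V : Type*} (G : SimpleGraph V) : ℕ :=
  sSup {n | ∃ s : Finset V, G.IsNClique n s}

/-- `G` is `H`-free: no induced subgraph of `G` is isomorphic to `H`. -/
def GraphFree {V W : Type*} (G : SimpleGraph V) (H : SimpleGraph W) : Prop :=
  ∀ s : Set V, IsEmpty ((G.induce s) ≃g H)

/-- `G` is `ωψ`-perfect. -/
def OmegaPsiPerfect {V : Type*} (G : SimpleGraph V) : Prop :=
  ∀ s : Set V, cliqueNumber (G.induce s) = pseudoachromaticNumber (G.induce s)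

/-- `G` is `χψ`-perfect. -/
def ChiPsiPerfect {V : Type*} (G : SimpleGraph V) : Prop :=
  ∀ s : Set V, chromNumber (G.induce s) = pseudoachromaticNumber (G.induce s)

/-- The path on 4 vertices. -/
def pathP4 : SimpleGraph (Fin 4) :=
  SimpleGraph.fromRel (fun a b => (b : ℕ) = (a : ℕ) + 1)

/-- The cycle on 4 vertices. -/
def cycleC4 : SimpleGraph (Fin 4) :=
  SimpleGraph.fromRel (fun a b => b = a + 1)

/-- The disjoint union of a path on 3 vertices and an edge. -/
def graphP3K2 : SimpleGraph (Fin 5) :=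
  SimpleGraph.fromRel (fun a b => (a, b) ∈ [((0 : Fin 5), (1 : Fin 5)), (1, 2), (3, 4)])

/-- The disjoint union of three edges. -/
def graph3K2 : SimpleGraph (Fin 6) :=
  SimpleGraph.fromRel (fun a b => (a, b) ∈ [((0 : Fin 6), (1 : Fin 6)), (2, 3), (4, 5)])

/-- The join of two graphs. -/
def graphJoin {V W : Type*} (G : SimpleGraph V) (H : SimpleGraph W) : SimpleGraph (V ⊕ W) :=
  SimpleGraph.fromRel (fun x y =>
    match x, y with
    | Sum.inl a, Sum.inl b => G.Adj a b
    | Sum.inr a, Sum.inr b => H.Adj a b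
    | _, _ => True)

/-- The disjoint union of two graphs. -/
def graphSum {V W : Type*} (G : SimpleGraph V) (H : SimpleGraph W) : SimpleGraph (V ⊕ W) :=
  SimpleGraph.fromRel (fun x y =>
    match x, y with
    | Sum.inl a, Sum.inl b => G.Adj a b
    | Sum.inr a, Sum.inr b => H.Adj a b
    | _, _ => False)

/-- The disjoint union of a family of graphs. -/
def graphSigma {ι : Type} {U : ι → Type} (f : ∀ i, SimpleGraph (U i)) :
    SimpleGraph (Σ i, U i) :=
  SimpleGraph.fromRel (fun x y => ∃ h : x.1 = y.1, (f y.1).Adj (h ▸ x.2) y.2)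

/-!
A clique coloured injectively is a complete colouring, so `ω ≤ ψ` always. Each of `C₄`, `P₄`,
`P₃ ∪ K₂`, `3K₂` is triangle-free but has a complete 3-colouring, so an `ωψ`-perfect graph
contains none of them.

Conversely, in a `(C₄, P₄)`-free graph the closed neighbourhoods of adjacent vertices are
nested, so a non-isolated vertex `u` with the most neighbours dominates its component. Given a
complete `k`-colouring, either every edge lies in that component, and then dropping `u` and its
colour leaves a complete `(k-1)`-colouring of `N(u)`, whose clique (by induction) extends by `u`;
or some edge lies outside it, and then `P₃ ∪ K₂`- and `3K₂`-freeness make both the component of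
`u` and the set of other non-isolated vertices cliques, one of which carries all `k` colours.
-/

open Finset

section InducedSubgraphs

variable {V W : Type*} {G : SimpleGraph V} {H : SimpleGraph W}

theorem graphFree_iff_not_isIndContained : GraphFree G H ↔ ¬H ⊴ G := by
  simp only [GraphFree, isIndContained_iff_exists_iso_induce, not_exists, not_nonempty_iff]
  exact forall_congr' fun s =>
    ⟨fun h => ⟨fun e => h.false e.symm⟩, fun h => ⟨fun e => h.false e.symm⟩⟩

theorem GraphFree.induce (h : GraphFree G H) (s : Set V) : GraphFree (G.induce s) H :=
  graphFree_iff_not_isIndContained.mpr fun hH =>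
    graphFree_iff_not_isIndContained.mp h (hH.trans (Embedding.induce s).isIndContained)

theorem GraphFree.false_of_adj_iff (h : GraphFree G H) {f : W → V} (hf : f.Injective)
    (hadj : ∀ i j, G.Adj (f i) (f j) ↔ H.Adj i j) : False :=
  graphFree_iff_not_isIndContained.mp h ⟨⟨⟨f, hf⟩, hadj _ _⟩⟩

end InducedSubgraphs

instance : DecidableRel cycleC4.Adj := by unfold cycleC4; infer_instance
instance : DecidableRel pathP4.Adj := by unfold pathP4; infer_instance
instance : DecidableRel graphP3K2.Adj := by unfold graphP3K2; infer_instance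
instance : DecidableRel graph3K2.Adj := by unfold graph3K2; infer_instance

section Configurations

variable {V : Type*} {G : SimpleGraph V}

theorem GraphFree.false_of_cycleC4 (h : GraphFree G cycleC4) {a b c d : V} (hac : a ≠ c)
    (hbd : b ≠ d) (hab : G.Adj a b) (hbc : G.Adj b c) (hcd : G.Adj c d) (hda : G.Adj d a)
    (hac' : ¬G.Adj a c) (hbd' : ¬G.Adj b d) : False :=
  h.false_of_adj_iff (f := ![a, b, c, d])
    (fun i j _ => by fin_cases i <;> fin_cases j <;> simp_all [G.adj_comm])
    (fun i j => by fin_cases i <;> fin_cases j <;> simp_all [G.adj_comm] <;> decide)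

theorem GraphFree.false_of_pathP4 (h : GraphFree G pathP4) {a b c d : V} (hab : G.Adj a b)
    (hbc : G.Adj b c) (hcd : G.Adj c d) (hac : ¬G.Adj a c) (hbd : ¬G.Adj b d)
    (had : ¬G.Adj a d) : False :=
  h.false_of_adj_iff (f := ![a, b, c, d])
    (fun i j _ => by fin_cases i <;> fin_cases j <;> simp_all [G.adj_comm])
    (fun i j => by fin_cases i <;> fin_cases j <;> simp_all [G.adj_comm] <;> decide)

theorem GraphFree.adj_of_anticomplete_edge (h : GraphFree G graphP3K2) {Q : Set V} {u w : V}
    (huw : G.Adj u w) (hu : ∀ z ∈ Q, ¬G.Adj z u) (hw : ∀ z ∈ Q, ¬G.Adj z w) ⦃a b c : V⦄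
    (ha : a ∈ Q) (hb : b ∈ Q) (hc : c ∈ Q) (hac : a ≠ c) (hab : G.Adj a b)
    (hbc : G.Adj b c) : G.Adj a c := by
  by_contra hac'
  have := hu a ha; have := hw a ha; have := hu b hb; have := hw b hb
  have := hu c hc; have := hw c hc
  exact h.false_of_adj_iff (f := ![a, b, c, u, w])
    (fun i j _ => by fin_cases i <;> fin_cases j <;> simp_all [G.adj_comm])
    (fun i j => by fin_cases i <;> fin_cases j <;> simp_all [G.adj_comm] <;> decide)

theorem GraphFree.adj_or_adj_of_anticomplete_edge (h : GraphFree G graph3K2) {Q : Set V} {u w : V}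
    (huw : G.Adj u w) (hu : ∀ z ∈ Q, ¬G.Adj z u) (hw : ∀ z ∈ Q, ¬G.Adj z w) {a b c d : V}
    (ha : a ∈ Q) (hb : b ∈ Q) (hc : c ∈ Q) (hd : d ∈ Q) (hab : G.Adj a b) (hcd : G.Adj c d) :
    G.Adj a c ∨ G.Adj a d ∨ G.Adj b c ∨ G.Adj b d := by
  by_contra! hn
  obtain ⟨_, _, _, _⟩ := hn
  have := hu a ha; have := hw a ha; have := hu b hb; have := hw b hb
  have := hu c hc; have := hw c hc; have := hu d hd; have := hw d hd
  exact h.false_of_adj_iff (f := ![a, b, c, d, u, w])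
    (fun i j _ => by fin_cases i <;> fin_cases j <;> simp_all [G.adj_comm])
    (fun i j => by fin_cases i <;> fin_cases j <;> simp_all [G.adj_comm] <;> decide)

end Configurations

section Structure

variable {V : Type*} {G : SimpleGraph V}

theorem neighborSet_subset_or_of_adj (hC4 : GraphFree G cycleC4) (hP4 : GraphFree G pathP4)
    {x y : V} (hxy : G.Adj x y) :
    G.neighborSet x ⊆ insert y (G.neighborSet y) ∨
      G.neighborSet y ⊆ insert x (G.neighborSet x) := by
  by_contra! h
  obtain ⟨⟨p, hxp, hp⟩, ⟨q, hyq, hq⟩⟩ := And.imp Set.not_subset.mp Set.not_subset.mp h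
  simp only [Set.mem_insert_iff, mem_neighborSet, not_or] at hxp hyq hp hq
  by_cases hpq : G.Adj p q
  · exact hC4.false_of_cycleC4 hp.1 (Ne.symm hq.1) hxp.symm hxy hyq hpq.symm
      (fun h => hp.2 h.symm) hq.2
  · exact hP4.false_of_pathP4 hxp.symm hxy hyq (fun h => hp.2 h.symm) hq.2 hpq

theorem exists_dominating_vertex (hC4 : GraphFree G cycleC4) (hP4 : GraphFree G pathP4)
    {s : Finset V} (hs : ∃ x ∈ s, ∃ y ∈ s, G.Adj x y) :
    ∃ u ∈ s, (∃ w ∈ s, G.Adj u w) ∧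
      ∀ a ∈ s, ∀ b ∈ s, (a = u ∨ G.Adj u a) → G.Adj a b → b = u ∨ G.Adj u b := by
  classical
  let N : V → Finset V := fun x => s.filter fun z => z = x ∨ G.Adj x z
  obtain ⟨x, hx, y, hy, hxy⟩ := hs
  obtain ⟨u, hu, hmax⟩ := (s.filter fun z => ∃ w ∈ s, G.Adj z w).exists_max_image
    (fun z => (N z).card) ⟨x, mem_filter.mpr ⟨hx, y, hy, hxy⟩⟩
  obtain ⟨hus, hw⟩ := mem_filter.mp hu
  refine ⟨u, hus, hw, fun a ha b hb hua hab => ?_⟩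
  rcases hua with rfl | hua
  · exact Or.inr hab
  rcases neighborSet_subset_or_of_adj hC4 hP4 hua with h | h
  · have hsub : N u ⊆ N a := fun z hz => by
      obtain ⟨hzs, rfl | huz⟩ := mem_filter.mp hz
      · exact mem_filter.mpr ⟨hzs, Or.inr hua.symm⟩
      · exact mem_filter.mpr ⟨hzs, h huz⟩
    have heq := eq_of_subset_of_card_le hsub (hmax a (mem_filter.mpr ⟨ha, b, hb, hab⟩))
    have hbN : b ∈ N a := mem_filter.mpr ⟨hb, Or.inr hab⟩
    rw [← heq] at hbN
    exact (mem_filter.mp hbN).2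
  · exact h hab

theorem isClique_of_dominating (hP3K2 : GraphFree G graphP3K2) {P : Set V} {u x y : V}
    (hu : u ∈ P) (huP : ∀ p ∈ P, p = u ∨ G.Adj u p) (hxy : G.Adj x y)
    (hx : ∀ p ∈ P, ¬G.Adj p x) (hy : ∀ p ∈ P, ¬G.Adj p y) : G.IsClique P := by
  intro a ha b hb hab
  rcases huP a ha with rfl | hua <;> rcases huP b hb with rfl | hub
  · exact absurd rfl hab
  · exact hub
  · exact hua.symm
  · exact hP3K2.adj_of_anticomplete_edge hxy hx hy ha hu hb hab hua.symm hub

theorem isClique_of_anticomplete_edge (hP3K2 : GraphFree G graphP3K2)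
    (h3K2 : GraphFree G graph3K2) {Q : Set V} {u w : V} (hQ : ∀ z ∈ Q, ∃ z' ∈ Q, G.Adj z z')
    (huw : G.Adj u w) (hu : ∀ z ∈ Q, ¬G.Adj z u) (hw : ∀ z ∈ Q, ¬G.Adj z w) :
    G.IsClique Q := by
  intro z₁ h₁ z₂ h₂ hne
  by_contra hn
  obtain ⟨a₁, ha₁, hz₁⟩ := hQ z₁ h₁
  obtain ⟨a₂, ha₂, hz₂⟩ := hQ z₂ h₂
  have path := hP3K2.adj_of_anticomplete_edge huw hu hw
  have h₁₂ : ¬G.Adj z₁ a₂ := fun h => hn (path h₁ ha₂ h₂ hne h hz₂.symm)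
  have h₂₁ : ¬G.Adj a₁ z₂ := fun h => hn (path h₁ ha₁ h₂ hne hz₁ h)
  have hz₁a₂ : z₁ ≠ a₂ := by rintro rfl; exact hn hz₂.symm
  rcases h3K2.adj_or_adj_of_anticomplete_edge huw hu hw h₁ ha₁ h₂ ha₂ hz₁ hz₂ with
    h | h | h | h
  · exact hn h
  · exact h₁₂ h
  · exact h₂₁ h
  · exact h₁₂ (path h₁ ha₁ ha₂ hz₁a₂ hz₁ h)

end Structure

/-- The restriction of `c` to `s` is a complete colouring with colour set `C`; colours outside
`C` may occur on `s` as well. -/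
def IsCompleteOn {V α : Type*} (G : SimpleGraph V) (s : Finset V) (c : V → α) (C : Finset α) :
    Prop :=
  Set.SurjOn c s C ∧ ∀ i ∈ C, ∀ j ∈ C, i ≠ j → ∃ x ∈ s, ∃ y ∈ s, G.Adj x y ∧ c x = i ∧ c y = j

namespace IsCompleteOn

variable {V α : Type*} {G : SimpleGraph V} {s : Finset V} {c : V → α} {C : Finset α}

theorem exists_isClique_of_card_le_one (hc : IsCompleteOn G s c C) (hC : C.card ≤ 1) :
    ∃ t ⊆ s, G.IsClique (t : Set V) ∧ C.card ≤ t.card := by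
  rcases C.eq_empty_or_nonempty with rfl | ⟨i, hi⟩
  · exact ⟨∅, empty_subset _, by simp, by simp⟩
  · obtain ⟨v, hv, -⟩ := hc.1 hi
    exact ⟨{v}, singleton_subset_iff.mpr hv, by simp, by simpa using hC⟩

theorem surjOn_or_surjOn (hc : IsCompleteOn G s c C) (hC : 1 < C.card) {A B : Finset V}
    (hAB : ∀ x ∈ s, ∀ y ∈ s, G.Adj x y → (x ∈ A ∧ y ∈ A) ∨ (x ∈ B ∧ y ∈ B)) :
    Set.SurjOn c A C ∨ Set.SurjOn c B C := by
  refine or_iff_not_imp_left.mpr fun hA => ?_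
  obtain ⟨i, hi, hiA⟩ : ∃ i ∈ C, i ∉ c '' A := by
    simpa [Set.SurjOn, Set.subset_def] using hA
  have hB : ∀ j ∈ C, j ≠ i → ∃ x ∈ B, c x = i ∧ ∃ y ∈ B, c y = j := by
    intro j hj hji
    obtain ⟨x, hx, y, hy, hxy, hcx, hcy⟩ := hc.2 i hi j hj hji.symm
    rcases hAB x hx y hy hxy with ⟨hxA, -⟩ | ⟨hxB, hyB⟩
    · exact absurd ⟨x, hxA, hcx⟩ hiA
    · exact ⟨x, hxB, hcx, y, hyB, hcy⟩
  intro j hj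
  by_cases hji : j = i
  · obtain ⟨j', hj', hj'i⟩ := exists_mem_ne hC i
    obtain ⟨x, hx, hcx, -⟩ := hB j' hj' hj'i
    exact ⟨x, hx, hcx.trans hji.symm⟩
  · obtain ⟨-, -, -, y, hy, hcy⟩ := hB j hj hji
    exact ⟨y, hy, hcy⟩

theorem filter_adj_erase [DecidableEq α] [DecidableRel G.Adj] (hc : IsCompleteOn G s c C)
    (hC : 1 < C.card) {u : V}
    (hu : ∀ x ∈ s, ∀ y ∈ s, G.Adj x y → x = u ∨ G.Adj u x) :
    IsCompleteOn G (s.filter (G.Adj u)) c (C.erase (c u)) := by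
  have hmem : ∀ x ∈ s, ∀ y ∈ s, G.Adj x y → c x ≠ c u → x ∈ s.filter (G.Adj u) :=
    fun x hx y hy hxy hcx =>
      mem_filter.mpr ⟨hx, (hu x hx y hy hxy).resolve_left fun h => hcx (congrArg c h)⟩
  refine ⟨fun i hi => ?_, fun i hi j hj hij => ?_⟩
  · obtain ⟨hiu, hiC⟩ := mem_erase.mp hi
    obtain ⟨j, hj, hji⟩ := exists_mem_ne hC i
    obtain ⟨x, hx, y, hy, hxy, rfl, -⟩ := hc.2 _ hiC j hj hji.symm
    exact ⟨x, hmem x hx y hy hxy hiu, rfl⟩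
  · obtain ⟨hiu, hiC⟩ := mem_erase.mp hi
    obtain ⟨hju, hjC⟩ := mem_erase.mp hj
    obtain ⟨x, hx, y, hy, hxy, rfl, rfl⟩ := hc.2 _ hiC _ hjC hij
    exact ⟨x, hmem x hx y hy hxy hiu, y, hmem y hy x hx hxy.symm hju, hxy, rfl, rfl⟩

theorem exists_isClique_of_two_components (hP3K2 : GraphFree G graphP3K2)
    (h3K2 : GraphFree G graph3K2) (hc : IsCompleteOn G s c C) (hC : 1 < C.card) {u w : V}
    (hus : u ∈ s) (hws : w ∈ s) (huw : G.Adj u w)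
    (hclosed : ∀ a ∈ s, ∀ b ∈ s, (a = u ∨ G.Adj u a) → G.Adj a b → b = u ∨ G.Adj u b)
    {x y : V} (hx : x ∈ s) (hy : y ∈ s) (hxy : G.Adj x y) (hxu : ¬(x = u ∨ G.Adj u x)) :
    ∃ t ⊆ s, G.IsClique (t : Set V) ∧ C.card ≤ t.card := by
  classical
  set A := s.filter fun z => z = u ∨ G.Adj u z
  set B := s.filter fun z => z ∉ A ∧ ∃ z' ∈ s, G.Adj z z'
  have hA_closed : ∀ a ∈ A, ∀ b ∈ s, G.Adj a b → b ∈ A := fun a ha b hb hab =>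
    mem_filter.mpr ⟨hb, hclosed a (mem_filter.mp ha).1 b hb (mem_filter.mp ha).2 hab⟩
  have huA : u ∈ A := mem_filter.mpr ⟨hus, Or.inl rfl⟩
  have hxA : x ∉ A := fun h => hxu (mem_filter.mp h).2
  have hA : G.IsClique (A : Set V) :=
    isClique_of_dominating hP3K2 huA (fun p hp => (mem_filter.mp hp).2) hxy
      (fun p hp h => hxA (hA_closed p hp x hx h))
      (fun p hp h => hxA (hA_closed y (hA_closed p hp y hy h) x hx hxy.symm))
  have hB_anti : ∀ z ∈ (B : Set V), ∀ a ∈ A, ¬G.Adj z a := fun z hz a ha h =>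
    (mem_filter.mp hz).2.1 (hA_closed a ha z (mem_filter.mp hz).1 h.symm)
  have hB_nonisolated : ∀ z ∈ (B : Set V), ∃ z' ∈ (B : Set V), G.Adj z z' := by
    intro z hz
    obtain ⟨hzs, hzA, z', hz's, hzz'⟩ := mem_filter.mp hz
    refine ⟨z', mem_filter.mpr ⟨hz's, fun h => hzA (hA_closed z' h z hzs hzz'.symm), z, hzs,
      hzz'.symm⟩, hzz'⟩
  have hwA : w ∈ A := hA_closed u huA w hws huw
  have hB : G.IsClique (B : Set V) :=
    isClique_of_anticomplete_edge hP3K2 h3K2 hB_nonisolated huw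
      (fun z hz => hB_anti z hz u huA) (fun z hz => hB_anti z hz w hwA)
  have hAB : ∀ a ∈ s, ∀ b ∈ s, G.Adj a b → (a ∈ A ∧ b ∈ A) ∨ (a ∈ B ∧ b ∈ B) := by
    intro a ha b hb hab
    by_cases haA : a ∈ A
    · exact Or.inl ⟨haA, hA_closed a haA b hb hab⟩
    · have hbA : b ∉ A := fun h => haA (hA_closed b h a ha hab.symm)
      exact Or.inr ⟨mem_filter.mpr ⟨ha, haA, b, hb, hab⟩, mem_filter.mpr ⟨hb, hbA, a, ha, hab.symm⟩⟩
  rcases hc.surjOn_or_surjOn hC hAB with h | h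
  · exact ⟨A, filter_subset _ _, hA, card_le_card_of_surjOn c h⟩
  · exact ⟨B, filter_subset _ _, hB, card_le_card_of_surjOn c h⟩

end IsCompleteOn

theorem IsCompleteOn.exists_isClique {V α : Type*} {G : SimpleGraph V}
    (hC4 : GraphFree G cycleC4) (hP4 : GraphFree G pathP4) (hP3K2 : GraphFree G graphP3K2)
    (h3K2 : GraphFree G graph3K2) {s : Finset V} {c : V → α} {C : Finset α}
    (hc : IsCompleteOn G s c C) : ∃ t ⊆ s, G.IsClique (t : Set V) ∧ C.card ≤ t.card := by
  classical
  induction s using Finset.strongInduction generalizing C with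
  | H s ih =>
  rcases le_or_gt C.card 1 with hC | hC
  · exact hc.exists_isClique_of_card_le_one hC
  obtain ⟨i, hi, j, hj, hij⟩ := one_lt_card.mp hC
  obtain ⟨x, hx, y, hy, hxy, -⟩ := hc.2 i hi j hj hij
  obtain ⟨u, hus, ⟨w, hws, huw⟩, hclosed⟩ := exists_dominating_vertex hC4 hP4 ⟨x, hx, y, hy, hxy⟩
  by_cases hstar : ∀ x ∈ s, ∀ y ∈ s, G.Adj x y → x = u ∨ G.Adj u x
  · have hsub : s.filter (G.Adj u) ⊂ s := filter_ssubset.mpr ⟨u, hus, G.irrefl⟩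
    obtain ⟨t, hts, ht, hcard⟩ := ih _ hsub (hc.filter_adj_erase hC hstar)
    have hut : ∀ v ∈ t, G.Adj u v := fun v hv => (mem_filter.mp (hts hv)).2
    refine ⟨insert u t, insert_subset hus (hts.trans (filter_subset _ _)), ?_, ?_⟩
    · rw [coe_insert]
      exact ht.insert fun v hv _ => hut v hv
    · have := pred_card_le_card_erase (s := C) (a := c u)
      rw [card_insert_of_notMem fun h => G.irrefl (hut u h)]
      omega
  · simp only [not_forall] at hstar
    obtain ⟨x, hx, y, hy, hxy, hxu⟩ := hstar
    exact hc.exists_isClique_of_two_components hP3K2 h3K2 hC hus hws huw hclosed hx hy hxy hxu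

section Numbers

variable {V W : Type*} {G : SimpleGraph V} {H : SimpleGraph W} {c : V → ℕ} {k : ℕ}

theorem IsCompleteColoring.isCompleteOn [Fintype V] (hc : IsCompleteColoring G c k) :
    IsCompleteOn G univ c (range k) := by
  refine ⟨fun i hi => ?_, fun i hi j hj hij => ?_⟩
  · obtain ⟨v, hv⟩ := hc.2.1 i (mem_range.mp hi)
    exact ⟨v, mem_univ v, hv⟩
  · obtain ⟨x, y, hxy, hx, hy⟩ := hc.2.2 i j (mem_range.mp hi) (mem_range.mp hj) hij
    exact ⟨x, mem_univ x, y, mem_univ y, hxy, hx, hy⟩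

theorem IsCompleteColoring.comp_iso {c : W → ℕ} (hc : IsCompleteColoring H c k) (e : G ≃g H) :
    IsCompleteColoring G (c ∘ e) k := by
  refine ⟨fun v => hc.1 (e v), fun i hi => ?_, fun i j hi hj hij => ?_⟩
  · obtain ⟨w, hw⟩ := hc.2.1 i hi
    exact ⟨e.symm w, by simp [hw]⟩
  · obtain ⟨x, y, hxy, hx, hy⟩ := hc.2.2 i j hi hj hij
    exact ⟨e.symm x, e.symm y, e.symm.map_adj_iff.mpr hxy, by simp [hx], by simp [hy]⟩

theorem SimpleGraph.IsNClique.exists_isCompleteColoring {t : Finset V} {n : ℕ}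
    (ht : G.IsNClique n t) (hn : 0 < n) : ∃ c, IsCompleteColoring G c n := by
  classical
  let e := t.equivFinOfCardEq ht.card_eq
  refine ⟨fun v => if hv : v ∈ t then e ⟨v, hv⟩ else 0, fun v => ?_, fun i hi => ?_,
    fun i j hi hj hij => ?_⟩
  · dsimp only
    split_ifs
    exacts [(e _).2, hn]
  · exact ⟨e.symm ⟨i, hi⟩, by simp⟩
  · refine ⟨e.symm ⟨i, hi⟩, e.symm ⟨j, hj⟩, ht.1 (e.symm _).2 (e.symm _).2 ?_, by simp, by simp⟩
    simpa [Subtype.ext_iff, Fin.ext_iff] using hij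

theorem le_pseudoachromaticNumber [Finite V] (hc : IsCompleteColoring G c k) :
    k ≤ pseudoachromaticNumber G := by
  have := Fintype.ofFinite V
  refine le_csSup ⟨Fintype.card V, fun k ⟨c, hc⟩ => ?_⟩ ⟨c, hc⟩
  simpa using card_le_card_of_surjOn c hc.isCompleteOn.1

theorem SimpleGraph.IsNClique.le_cliqueNumber [Finite V] {t : Finset V} {n : ℕ}
    (ht : G.IsNClique n t) : n ≤ cliqueNumber G := by
  have := Fintype.ofFinite V
  exact le_csSup ⟨Fintype.card V, fun n ⟨t, ht⟩ => ht.card_eq ▸ card_le_univ t⟩ ⟨t, ht⟩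

theorem cliqueNumber_le_of_cliqueFree {n : ℕ} (h : G.CliqueFree (n + 1)) : cliqueNumber G ≤ n :=
  csSup_le' fun _ ⟨_, ht⟩ => not_lt.mp fun hm => ht.not_cliqueFree (h.mono hm)

theorem cliqueNumber_le_pseudoachromaticNumber [Finite V] :
    cliqueNumber G ≤ pseudoachromaticNumber G :=
  csSup_le' fun n ⟨_, ht⟩ => n.eq_zero_or_pos.elim (fun hn => hn ▸ Nat.zero_le _)
    fun hn => (ht.exists_isCompleteColoring hn).elim fun _ hc => le_pseudoachromaticNumber hc

theorem pseudoachromaticNumber_le_cliqueNumber [Finite V] (hC4 : GraphFree G cycleC4)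
    (hP4 : GraphFree G pathP4) (hP3K2 : GraphFree G graphP3K2) (h3K2 : GraphFree G graph3K2) :
    pseudoachromaticNumber G ≤ cliqueNumber G := by
  have := Fintype.ofFinite V
  refine csSup_le' fun k ⟨c, hc⟩ => ?_
  obtain ⟨t, -, ht, hk⟩ := hc.isCompleteOn.exists_isClique hC4 hP4 hP3K2 h3K2
  rw [card_range] at hk
  exact hk.trans (IsNClique.le_cliqueNumber ⟨ht, rfl⟩)

theorem OmegaPsiPerfect.graphFree [Finite V] (hG : OmegaPsiPerfect G) (hH : H.CliqueFree 3)
    {c : W → ℕ} (hc : IsCompleteColoring H c 3) : GraphFree G H := fun s =>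
  ⟨fun e => by
    classical
    have h₁ : cliqueNumber (G.induce s) ≤ 2 :=
      cliqueNumber_le_of_cliqueFree (hH.comap e.isContained)
    have h₂ : 3 ≤ pseudoachromaticNumber (G.induce s) := le_pseudoachromaticNumber (hc.comp_iso e)
    have := hG s
    omega⟩

end Numbers

theorem cliqueFree_three_of_forall {V : Type*} {G : SimpleGraph V}
    (h : ∀ a b c, G.Adj a b → G.Adj a c → G.Adj b c → False) : G.CliqueFree 3 := by
  classical
  intro _ ht
  obtain ⟨a, b, c, hab, hac, hbc, -⟩ := is3Clique_iff.mp ht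
  exact h a b c hab hac hbc

theorem isCompleteColoring_cycleC4 : IsCompleteColoring cycleC4 ![0, 1, 2, 0] 3 := by
  refine ⟨by decide, by decide, fun i j hi hj => ?_⟩
  interval_cases i <;> interval_cases j <;> decide

theorem isCompleteColoring_pathP4 : IsCompleteColoring pathP4 ![0, 1, 2, 0] 3 := by
  refine ⟨by decide, by decide, fun i j hi hj => ?_⟩
  interval_cases i <;> interval_cases j <;> decide

theorem isCompleteColoring_graphP3K2 : IsCompleteColoring graphP3K2 ![1, 0, 2, 1, 2] 3 := by
  refine ⟨by decide, by decide, fun i j hi hj => ?_⟩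
  interval_cases i <;> interval_cases j <;> decide

theorem isCompleteColoring_graph3K2 : IsCompleteColoring graph3K2 ![0, 1, 0, 2, 1, 2] 3 := by
  refine ⟨by decide, by decide, fun i j hi hj => ?_⟩
  interval_cases i <;> interval_cases j <;> decide

theorem stmt_17 {V : Type*} [Fintype V] (G : SimpleGraph V) :
    OmegaPsiPerfect G ↔
      (GraphFree G cycleC4 ∧ GraphFree G pathP4 ∧ GraphFree G graphP3K2 ∧
        GraphFree G graph3K2) := by
  refine ⟨fun hG => ⟨?_, ?_, ?_, ?_⟩, fun ⟨hC4, hP4, hP3K2, h3K2⟩ s => ?_⟩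
  · exact hG.graphFree (cliqueFree_three_of_forall (by decide)) isCompleteColoring_cycleC4
  · exact hG.graphFree (cliqueFree_three_of_forall (by decide)) isCompleteColoring_pathP4
  · exact hG.graphFree (cliqueFree_three_of_forall (by decide)) isCompleteColoring_graphP3K2
  · exact hG.graphFree (cliqueFree_three_of_forall (by decide)) isCompleteColoring_graph3K2
  · exact cliqueNumber_le_pseudoachromaticNumber.antisymm
      (pseudoachromaticNumber_le_cliqueNumber (hC4.induce s) (hP4.induce s) (hP3K2.induce s)
        (h3K2.induce s))
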